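/- (Per-step descent toward the optimal toll.) If 2γ‖A‖² ≤ α, then for every s ∈ ℕ, ‖τ^{s+1} − τ⋆‖² − ‖τ^s − τ⋆‖² ≤ 2γ·( d(τ^{s+1}) − d(τ⋆) + 2ε^s ). -/

import Mathlib

/-!
Write `y₀` for the exact minimiser of the tolled potential at the toll `τ`. Strong convexity gives
quadratic growth around `y₀`, so an `ε`-equilibrium `y` lies within `‖y - y₀‖² ≤ 2ε/α` of it, and
`A y - b` is an inexact oracle for the concave dual function `d`: it is an `ε`-supergradient,
and `d` lies above its linearisation minus `‖A‖²/α · ‖τ' - τ‖² + ε`. The toll update is a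
projected supergradient step onto the nonnegative orthant, and the standard three-point estimate
for such a step, combined with these two inequalities, gives the claim. The step-size condition
`2γ‖A‖² ≤ α` is exactly what lets `‖τ' - τ‖²` absorb the curvature term.
-/

open Filter Topology
open scoped RealInnerProductSpace

section StrongConvexity

variable {E : Type*} [NormedAddCommGroup E] [NormedSpace ℝ E] {s : Set E} {m : ℝ} {f g : E → ℝ}

theorem StrongConvexOn.add_convexOn (hf : StrongConvexOn s m f) (hg : ConvexOn ℝ s g) :
    StrongConvexOn s m (f + g) := by
  unfold StrongConvexOn
  simpa using hf.add hg.uniformConvexOn_zero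

theorem StrongConvexOn.add_sq_norm_sub_le_of_isMinOn {x₀ x : E} (hf : StrongConvexOn s m f)
    (hmin : IsMinOn f s x₀) (hx₀ : x₀ ∈ s) (hx : x ∈ s) :
    f x₀ + m / 2 * ‖x - x₀‖ ^ 2 ≤ f x := by
  set c := m / 2 * ‖x - x₀‖ ^ 2
  have hsegment : ∀ a ∈ Set.Ioc (0 : ℝ) 1, (1 - a) * c ≤ f x - f x₀ := by
    rintro a ⟨ha₀, ha₁⟩
    have hab : a + (1 - a) = 1 := add_sub_cancel a 1
    have hconv := hf.2 hx hx₀ ha₀.le (sub_nonneg.2 ha₁) hab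
    have hle := isMinOn_iff.1 hmin _ (hf.1 hx hx₀ ha₀.le (sub_nonneg.2 ha₁) hab)
    simp only [smul_eq_mul] at hconv
    refine le_of_mul_le_mul_left ?_ ha₀
    linear_combination hconv + hle
  have hlim : Tendsto (fun a : ℝ => (1 - a) * c) (𝓝[>] 0) (𝓝 c) :=
    tendsto_nhdsWithin_of_tendsto_nhds <|
      (by fun_prop : Continuous fun a : ℝ => (1 - a) * c).tendsto' 0 c (by simp)
  linarith [le_of_tendsto hlim (eventually_of_mem (Ioc_mem_nhdsGT one_pos) hsegment)]

end StrongConvexity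

theorem mul_le_half_mul_sq_add_sq_div {m : ℝ} (hm : 0 < m) (p r : ℝ) :
    p * r ≤ m / 2 * r ^ 2 + p ^ 2 / (2 * m) := by
  have hsq : m / 2 * r ^ 2 + p ^ 2 / (2 * m) - p * r = (p - m * r) ^ 2 / (2 * m) := by
    field_simp
    ring
  have : 0 ≤ (p - m * r) ^ 2 / (2 * m) := by positivity
  linarith

section Lagrangian

variable {E F : Type*} [NormedAddCommGroup E] [InnerProductSpace ℝ E]
  [NormedAddCommGroup F] [InnerProductSpace ℝ F]

def lagrangian (f : E → ℝ) (A : E →L[ℝ] F) (b : F) (y : E) (τ : F) : ℝ :=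
  f y + ⟪τ, A y - b⟫

noncomputable def dualFunction (Y : Set E) (f : E → ℝ) (A : E →L[ℝ] F) (b : F) (τ : F) : ℝ :=
  sInf ((lagrangian f A b · τ) '' Y)

variable {Y : Set E} {f : E → ℝ} {A : E →L[ℝ] F} {b : F} {m ε : ℝ} {y : E} {τ : F}

theorem lagrangian_eq_add_inner (y : E) (τ τ' : F) :
    lagrangian f A b y τ' = lagrangian f A b y τ + ⟪τ' - τ, A y - b⟫ := by
  simp only [lagrangian, inner_sub_left]
  ring

theorem continuous_lagrangian (hf : Continuous f) (τ : F) : Continuous (lagrangian f A b · τ) := by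
  unfold lagrangian
  fun_prop

theorem StrongConvexOn.lagrangian (hf : StrongConvexOn Y m f) (τ : F) :
    StrongConvexOn Y m (lagrangian f A b · τ) := by
  have hlin := ((innerₛₗ ℝ τ ∘ₗ A.toLinearMap).convexOn hf.1).add_const (-⟪τ, b⟫)
  convert hf.add_convexOn hlin using 1
  ext y
  simp only [_root_.lagrangian, sub_eq_add_neg, inner_add_right, inner_neg_right,
    LinearMap.coe_comp, coe_innerₛₗ_apply, ContinuousLinearMap.coe_coe, Pi.add_apply,
    Function.comp_apply]

theorem dualFunction_le_lagrangian (hY : IsCompact Y) (hf : Continuous f) (hy : y ∈ Y) :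
    dualFunction Y f A b τ ≤ lagrangian f A b y τ :=
  csInf_le (hY.image (continuous_lagrangian hf τ)).bddBelow (Set.mem_image_of_mem _ hy)

theorem exists_dualFunction_add_sq_norm_sub_le (hY : IsCompact Y) (hne : Y.Nonempty)
    (hf : Continuous f) (hsc : StrongConvexOn Y m f) (τ : F) :
    ∃ y₀ ∈ Y, ∀ y ∈ Y, dualFunction Y f A b τ + m / 2 * ‖y - y₀‖ ^ 2 ≤ lagrangian f A b y τ := by
  obtain ⟨y₀, hy₀, hdual⟩ :=
    (hY.image (continuous_lagrangian (A := A) (b := b) hf τ)).sInf_mem (hne.image _)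
  have hmin : IsMinOn (lagrangian f A b · τ) Y y₀ := fun y hy =>
    hdual ▸ dualFunction_le_lagrangian hY hf hy
  refine ⟨y₀, hy₀, fun y hy => ?_⟩
  rw [dualFunction, ← hdual]
  exact (hsc.lagrangian τ).add_sq_norm_sub_le_of_isMinOn hmin hy₀ hy

theorem dualFunction_le_add_inner (hY : IsCompact Y) (hf : Continuous f) (hy : y ∈ Y)
    (hε : lagrangian f A b y τ ≤ dualFunction Y f A b τ + ε) (σ : F) :
    dualFunction Y f A b σ ≤ dualFunction Y f A b τ + ⟪A y - b, σ - τ⟫ + ε := by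
  have := dualFunction_le_lagrangian (A := A) (b := b) (τ := σ) hY hf hy
  rw [lagrangian_eq_add_inner y τ σ, real_inner_comm] at this
  linarith

theorem dualFunction_add_inner_le (hm : 0 < m) (hY : IsCompact Y) (hne : Y.Nonempty)
    (hf : Continuous f) (hsc : StrongConvexOn Y m f) (hy : y ∈ Y)
    (hε : lagrangian f A b y τ ≤ dualFunction Y f A b τ + ε) (τ' : F) :
    dualFunction Y f A b τ + ⟪A y - b, τ' - τ⟫ - ‖A‖ ^ 2 / m * ‖τ' - τ‖ ^ 2 - ε ≤
      dualFunction Y f A b τ' := by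
  obtain ⟨y₀, hy₀, hgrowth⟩ :=
    exists_dualFunction_add_sq_norm_sub_le (A := A) (b := b) hY hne hf hsc τ
  have hclose : m / 2 * ‖y - y₀‖ ^ 2 ≤ ε := by linarith [hgrowth y hy]
  refine le_csInf (hne.image _) ?_
  rintro _ ⟨y', hy', rfl⟩
  dsimp only
  have hsplit : A y' - b = (A y - b) + A (y' - y) := by rw [map_sub]; abel
  have hcross : -(‖τ' - τ‖ * (‖A‖ * ‖y' - y‖)) ≤ ⟪τ' - τ, A (y' - y)⟫ :=
    neg_le_of_abs_le ((abs_real_inner_le_norm _ _).trans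
      (mul_le_mul_of_nonneg_left (A.le_opNorm _) (norm_nonneg _)))
  have htri : ‖y' - y‖ ≤ ‖y' - y₀‖ + ‖y - y₀‖ := by
    simpa [norm_sub_rev y₀ y] using norm_sub_le_norm_sub_add_norm_sub y' y₀ y
  have hcross' : ‖τ' - τ‖ * (‖A‖ * ‖y' - y‖) ≤ ‖A‖ * ‖τ' - τ‖ * (‖y' - y₀‖ + ‖y - y₀‖) :=
    calc ‖τ' - τ‖ * (‖A‖ * ‖y' - y‖) = ‖A‖ * ‖τ' - τ‖ * ‖y' - y‖ := by ring
      _ ≤ _ := by gcongr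
  have h₁ := mul_le_half_mul_sq_add_sq_div hm (‖A‖ * ‖τ' - τ‖) ‖y' - y₀‖
  have h₂ := mul_le_half_mul_sq_add_sq_div hm (‖A‖ * ‖τ' - τ‖) ‖y - y₀‖
  have hhalves : (‖A‖ * ‖τ' - τ‖) ^ 2 / (2 * m) + (‖A‖ * ‖τ' - τ‖) ^ 2 / (2 * m) =
      ‖A‖ ^ 2 / m * ‖τ' - τ‖ ^ 2 := by
    field_simp
    ring
  rw [lagrangian_eq_add_inner y' τ τ', hsplit, inner_add_right, real_inner_comm (τ' - τ)]
  linarith [hgrowth y' hy']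

end Lagrangian

theorem norm_sub_sq_sub_norm_sub_sq_le {F : Type*} [NormedAddCommGroup F] [InnerProductSpace ℝ F]
    {τ τ' g σ : F} {γ : ℝ} (h : ⟪τ + γ • g - τ', σ - τ'⟫ ≤ 0) :
    ‖τ' - σ‖ ^ 2 - ‖τ - σ‖ ^ 2 ≤ 2 * γ * ⟪g, τ' - σ⟫ - ‖τ' - τ‖ ^ 2 := by
  have hexp : ‖τ - σ‖ ^ 2 = ‖τ' - σ‖ ^ 2 - 2 * ⟪τ' - σ, τ' - τ⟫ + ‖τ' - τ‖ ^ 2 := by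
    rw [← norm_sub_sq_real]
    congr 2
    abel
  have hrw : ⟪τ + γ • g - τ', σ - τ'⟫ = ⟪τ' - σ, τ' - τ⟫ - γ * ⟪g, τ' - σ⟫ := by
    rw [show τ + γ • g - τ' = γ • g - (τ' - τ) by abel, show σ - τ' = -(τ' - σ) by abel,
      inner_neg_right, inner_sub_left, real_inner_smul_left, real_inner_comm (τ' - τ)]
    ring
  linarith

theorem inner_sub_posPart_nonpos {κ : Type*} [Fintype κ] {v p σ : EuclideanSpace ℝ κ}
    (hp : ∀ i, p i = max (v i) 0) (hσ : ∀ i, 0 ≤ σ i) : ⟪v - p, σ - p⟫ ≤ 0 := by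
  rw [PiLp.inner_apply]
  refine Finset.sum_nonpos fun i _ => ?_
  simp only [RCLike.inner_apply, conj_trivial, PiLp.sub_apply, hp i]
  rcases le_total 0 (v i) with hv | hv
  · simp [max_eq_left hv]
  · rw [max_eq_right hv, sub_zero, sub_zero]
    exact mul_nonpos_of_nonneg_of_nonpos (hσ i) hv

theorem stmt_6_general
    {ι κ : Type*} [Fintype ι] [Fintype κ]
    (Y : Set (EuclideanSpace ℝ ι)) (hYne : Y.Nonempty) (hYcpt : IsCompact Y)
    (α : ℝ) (hα : 0 < α)
    (F₀ : EuclideanSpace ℝ ι → ℝ) (hF₀cont : Continuous F₀)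
    (hF₀sc : StrongConvexOn Y α F₀)
    (A : EuclideanSpace ℝ ι →L[ℝ] EuclideanSpace ℝ κ) (b : EuclideanSpace ℝ κ)
    (L : EuclideanSpace ℝ ι → EuclideanSpace ℝ κ → ℝ)
    (hL : ∀ y τ, L y τ = F₀ y + ⟪τ, A y - b⟫)
    (d : EuclideanSpace ℝ κ → ℝ)
    (hd : ∀ τ, d τ = sInf ((fun y => L y τ) '' Y))
    (γ : ℝ) (hγ : 0 < γ)
    (τs : ℕ → EuclideanSpace ℝ κ) (ys : ℕ → EuclideanSpace ℝ ι) (εs : ℕ → ℝ)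
    (hysY : ∀ s, ys s ∈ Y)
    (hyseq : ∀ s, L (ys s) (τs s) ≤ d (τs s) + εs s)
    (hupdate : ∀ s i, τs (s + 1) i = max (τs s i + γ * (A (ys s) - b) i) 0)
    (τstar : EuclideanSpace ℝ κ) (hτstarpos : ∀ i, 0 ≤ τstar i)
    (hstep : 2 * γ * ‖A‖ ^ 2 ≤ α)
    :
    ∀ s : ℕ,
      ‖τs (s + 1) - τstar‖ ^ 2 - ‖τs s - τstar‖ ^ 2 ≤
        2 * γ * (d (τs (s + 1)) - d τstar + 2 * εs s) := by
  obtain rfl : L = lagrangian F₀ A b := funext₂ hL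
  obtain rfl : d = dualFunction Y F₀ A b := funext hd
  intro s
  set τ := τs s
  set τ' := τs (s + 1)
  set g := A (ys s) - b
  have hproj : ⟪τ + γ • g - τ', τstar - τ'⟫ ≤ 0 :=
    inner_sub_posPart_nonpos (fun i => by simp [τ', hupdate, τ, g]) hτstarpos
  have hsup := dualFunction_le_add_inner hYcpt hF₀cont (hysY s) (hyseq s) τstar
  have hlow := dualFunction_add_inner_le hα hYcpt hYne hF₀cont hF₀sc (hysY s) (hyseq s) τ'
  have hcurv : 2 * γ * (‖A‖ ^ 2 / α) ≤ 1 := by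
    rw [← mul_div_assoc, div_le_one hα]
    exact hstep
  have hsplit : ⟪g, τ' - τstar⟫ = ⟪g, τ' - τ⟫ - ⟪g, τstar - τ⟫ := by
    rw [← inner_sub_right]
    congr 1
    abel
  have hγ' : 0 ≤ 2 * γ := by positivity
  linear_combination norm_sub_sq_sub_norm_sub_sq_le hproj + 2 * γ * hsplit +
    mul_le_mul_of_nonneg_left hsup hγ' + mul_le_mul_of_nonneg_left hlow hγ' +
    mul_le_mul_of_nonneg_right hcurv (sq_nonneg ‖τ' - τ‖)

theorem stmt_6
    {ι κ : Type*} [Fintype ι] [Fintype κ] [Nonempty ι] [Nonempty κ]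
    (Y : Set (EuclideanSpace ℝ ι)) (hYne : Y.Nonempty) (hYcpt : IsCompact Y)
    (hYconv : Convex ℝ Y)
    (α : ℝ) (hα : 0 < α)
    (F₀ : EuclideanSpace ℝ ι → ℝ) (hF₀cont : Continuous F₀)
    (hF₀sc : StrongConvexOn Y α F₀)
    (A : EuclideanSpace ℝ ι →L[ℝ] EuclideanSpace ℝ κ) (b : EuclideanSpace ℝ κ)
    (L : EuclideanSpace ℝ ι → EuclideanSpace ℝ κ → ℝ)
    (hL : ∀ y τ, L y τ = F₀ y + ⟪τ, A y - b⟫)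
    (d : EuclideanSpace ℝ κ → ℝ)
    (hd : ∀ τ, d τ = sInf ((fun y => L y τ) '' Y))
    (γ : ℝ) (hγ : 0 < γ)
    (τs : ℕ → EuclideanSpace ℝ κ) (ys : ℕ → EuclideanSpace ℝ ι) (εs : ℕ → ℝ)
    (hτ0 : ∀ i, 0 ≤ τs 0 i)
    (hεs : ∀ s, 0 ≤ εs s)
    (hysY : ∀ s, ys s ∈ Y)
    (hyseq : ∀ s, L (ys s) (τs s) ≤ d (τs s) + εs s)
    (hupdate : ∀ s i, τs (s + 1) i = max (τs s i + γ * (A (ys s) - b) i) 0)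
    (τstar : EuclideanSpace ℝ κ) (hτstarpos : ∀ i, 0 ≤ τstar i)
    (hτstarmax : ∀ σ : EuclideanSpace ℝ κ, (∀ i, 0 ≤ σ i) → d σ ≤ d τstar)
    (hstep : 2 * γ * ‖A‖ ^ 2 ≤ α)
    :
    ∀ s : ℕ,
      ‖τs (s + 1) - τstar‖ ^ 2 - ‖τs s - τstar‖ ^ 2 ≤
        2 * γ * (d (τs (s + 1)) - d τstar + 2 * εs s) :=
  stmt_6_general Y hYne hYcpt α hα F₀ hF₀cont hF₀sc A b L hL d hd γ hγ τs ys εs hysY hyseq hupdate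
    τstar hτstarpos hstep
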